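/- Let ε ≥ 0 and suppose v, w ∈ [0,1]^N satisfy v_i ≤ w_i ≤ v_i + ε/K for every i ∈ [N]. Then θ_v ≤ θ_w ≤ θ_v + ε, where θ_u = max_{S ⊆ [N], |S| ≤ K} R(S, u). -/

import Mathlib

/-- The expected reward `R(S, v)` of an assortment `S`. -/
noncomputable def Rew {N : ℕ} (r v : Fin N → ℝ) (S : Finset (Fin N)) : ℝ :=
  (∑ i ∈ S, r i * v i) / (1 + ∑ i ∈ S, v i)

/-- `θ_v`: the optimal expected reward over assortments of size at most `K`. -/
noncomputable def thetaOpt (N K : ℕ) (r v : Fin N → ℝ) : ℝ :=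
  ((Finset.univ : Finset (Fin N)).powerset.filter (fun S => S.card ≤ K)).sup'
    ⟨∅, by simp⟩ (Rew r v)

/- `Top([N], w, θ)`: take the `min {K, N}` items `i` with the largest values
`(r i − θ) * w i` (ties broken in favor of smaller index), then remove all items
with `r i − θ ≤ 0`. -/
open Classical in
noncomputable def TopSet (N K : ℕ) (r w : Fin N → ℝ) (θ : ℝ) : Finset (Fin N) :=
  ((List.insertionSort (fun i j =>
      (r j - θ) * w j < (r i - θ) * w i ∨
      ((r i - θ) * w i = (r j - θ) * w j ∧ i ≤ j)) (List.finRange N)).take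
    (min K N)).toFinset.filter (fun i => θ < r i)

/-! Since the denominator is positive, `R(S, v) ≤ θ` iff `∑_{i ∈ S} (r_i - θ) v_i ≤ θ`.
For `θ = θ_v`, passing from `v` to `w` on the items of an optimal assortment with `r_i > θ`
only increases this linear sum, so `θ_v ≤ θ_w`. Conversely, on any assortment each term
grows by `(r_i - θ)(w_i - v_i) ≤ w_i - v_i ≤ ε/K`, at most `ε` in total, so `θ_w ≤ θ_v + ε`. -/

open Finset

section Rew

variable {N : ℕ} (r v : Fin N → ℝ) (S : Finset (Fin N)) (θ : ℝ)

lemma one_add_sum_pos (hv : ∀ i, 0 ≤ v i) : 0 < 1 + ∑ i ∈ S, v i := by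
  have := sum_nonneg fun i (_ : i ∈ S) => hv i
  linarith

lemma sum_sub_mul_eq :
    ∑ i ∈ S, (r i - θ) * v i = ∑ i ∈ S, r i * v i - θ * ∑ i ∈ S, v i := by
  rw [mul_sum, ← sum_sub_distrib]
  exact sum_congr rfl fun i _ => by ring

variable {r v S θ}

lemma rew_le_iff (hv : ∀ i, 0 ≤ v i) :
    Rew r v S ≤ θ ↔ ∑ i ∈ S, (r i - θ) * v i ≤ θ := by
  rw [Rew, div_le_iff₀ (one_add_sum_pos v S hv), sum_sub_mul_eq]
  constructor <;> intro h <;> linarith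

lemma le_rew_iff (hv : ∀ i, 0 ≤ v i) :
    θ ≤ Rew r v S ↔ θ ≤ ∑ i ∈ S, (r i - θ) * v i := by
  rw [Rew, le_div_iff₀ (one_add_sum_pos v S hv), sum_sub_mul_eq]
  constructor <;> intro h <;> linarith

end Rew

section thetaOpt

variable {N K : ℕ} {r v : Fin N → ℝ}

lemma mem_assortments_iff {S : Finset (Fin N)} :
    S ∈ (univ : Finset (Fin N)).powerset.filter (fun S => S.card ≤ K) ↔ S.card ≤ K := by
  simp

lemma rew_le_thetaOpt {S : Finset (Fin N)} (hS : S.card ≤ K) :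
    Rew r v S ≤ thetaOpt N K r v :=
  le_sup' (Rew r v) (mem_assortments_iff.2 hS)

lemma thetaOpt_le {c : ℝ} (h : ∀ S : Finset (Fin N), S.card ≤ K → Rew r v S ≤ c) :
    thetaOpt N K r v ≤ c :=
  sup'_le _ _ fun S hS => h S (mem_assortments_iff.1 hS)

lemma exists_rew_eq_thetaOpt :
    ∃ S : Finset (Fin N), S.card ≤ K ∧ Rew r v S = thetaOpt N K r v := by
  obtain ⟨S, hS, hmax⟩ := exists_mem_eq_sup'
    ⟨∅, mem_assortments_iff (K := K).2 (card_empty.trans_le K.zero_le)⟩ (Rew r v)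
  exact ⟨S, mem_assortments_iff.1 hS, hmax.symm⟩

lemma thetaOpt_nonneg : 0 ≤ thetaOpt N K r v := by
  have h : Rew r v ∅ ≤ thetaOpt N K r v := rew_le_thetaOpt (card_empty.trans_le K.zero_le)
  simpa [Rew] using h

lemma thetaOpt_mono {w : Fin N → ℝ} (hv : ∀ i, 0 ≤ v i) (hvw : ∀ i, v i ≤ w i) :
    thetaOpt N K r v ≤ thetaOpt N K r w := by
  set θ := thetaOpt N K r v
  obtain ⟨S, hS, hSθ⟩ := exists_rew_eq_thetaOpt (K := K) (r := r) (v := v)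
  have hw : ∀ i, 0 ≤ w i := fun i => (hv i).trans (hvw i)
  have hθS : θ ≤ ∑ i ∈ S, (r i - θ) * v i := (le_rew_iff hv).1 hSθ.ge
  have hdrop : ∑ i ∈ S, (r i - θ) * v i ≤ ∑ i ∈ S with θ < r i, (r i - θ) * w i := by
    rw [sum_filter]
    refine sum_le_sum fun i _ => ?_
    split_ifs with hri
    · exact mul_le_mul_of_nonneg_left (hvw i) (sub_nonneg.2 hri.le)
    · exact mul_nonpos_of_nonpos_of_nonneg (sub_nonpos.2 (not_lt.1 hri)) (hv i)
  calc θ ≤ Rew r w (S.filter (θ < r ·)) := (le_rew_iff hw).2 (hθS.trans hdrop)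
    _ ≤ thetaOpt N K r w := rew_le_thetaOpt ((card_filter_le _ _).trans hS)

lemma sub_mul_le_sub_mul_add {r θ v w δ : ℝ} (hr : r ≤ 1) (hθ : 0 ≤ θ) (hvw : v ≤ w)
    (hwv : w ≤ v + δ) : (r - θ) * w ≤ (r - θ) * v + δ := by
  nlinarith

lemma card_mul_div_le {k K : ℕ} {ε : ℝ} (hε : 0 ≤ ε) (hk : k ≤ K) :
    (k : ℝ) * (ε / K) ≤ ε := by
  rw [mul_div_left_comm]
  exact mul_le_of_le_one_right hε (div_le_one_of_le₀ (by exact_mod_cast hk) K.cast_nonneg)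

lemma thetaOpt_le_add {w : Fin N → ℝ} {ε : ℝ} (hε : 0 ≤ ε) (hr : ∀ i, r i ≤ 1)
    (hv : ∀ i, 0 ≤ v i) (hvw : ∀ i, v i ≤ w i ∧ w i ≤ v i + ε / K) :
    thetaOpt N K r w ≤ thetaOpt N K r v + ε := by
  set θ := thetaOpt N K r v
  have hw : ∀ i, 0 ≤ w i := fun i => (hv i).trans (hvw i).1
  refine thetaOpt_le fun S hS => (rew_le_iff hw).2 ?_
  have hθS : ∑ i ∈ S, (r i - θ) * v i ≤ θ := (rew_le_iff hv).1 (rew_le_thetaOpt hS)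
  calc ∑ i ∈ S, (r i - (θ + ε)) * w i
      ≤ ∑ i ∈ S, (r i - θ) * w i :=
        sum_le_sum fun i _ => mul_le_mul_of_nonneg_right (by linarith) (hw i)
    _ ≤ ∑ i ∈ S, ((r i - θ) * v i + ε / K) :=
        sum_le_sum fun i _ =>
          sub_mul_le_sub_mul_add (hr i) thetaOpt_nonneg (hvw i).1 (hvw i).2
    _ = ∑ i ∈ S, (r i - θ) * v i + S.card * (ε / K) := by
        rw [sum_add_distrib, sum_const, nsmul_eq_mul]
    _ ≤ θ + ε := add_le_add hθS (card_mul_div_le hε hS)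

end thetaOpt

theorem stmt6_general (N K : ℕ) (r v w : Fin N → ℝ) (ε : ℝ)
    (hε : 0 ≤ ε) (hr : ∀ i, 0 < r i ∧ r i ≤ 1) (hv : ∀ i, 0 ≤ v i ∧ v i ≤ 1)
    (hvw : ∀ i, v i ≤ w i ∧ w i ≤ v i + ε / K) :
    thetaOpt N K r v ≤ thetaOpt N K r w ∧
      thetaOpt N K r w ≤ thetaOpt N K r v + ε :=
  ⟨thetaOpt_mono (fun i => (hv i).1) (fun i => (hvw i).1),
    thetaOpt_le_add hε (fun i => (hr i).2) (fun i => (hv i).1) hvw⟩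

/-- If `v_i ≤ w_i ≤ v_i + ε/K` for all `i`, then `θ_v ≤ θ_w ≤ θ_v + ε`. -/
theorem stmt6 (N K : ℕ) (hK : 1 ≤ K) (hKN : K ≤ N) (r v w : Fin N → ℝ) (ε : ℝ)
    (hε : 0 ≤ ε) (hr : ∀ i, 0 < r i ∧ r i ≤ 1) (hv : ∀ i, 0 ≤ v i ∧ v i ≤ 1)
    (hw : ∀ i, 0 ≤ w i ∧ w i ≤ 1)
    (hvw : ∀ i, v i ≤ w i ∧ w i ≤ v i + ε / K) :
    thetaOpt N K r v ≤ thetaOpt N K r w ∧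
      thetaOpt N K r w ≤ thetaOpt N K r v + ε :=
  stmt6_general N K r v w ε hε hr hv hvw
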